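/- Let λ₁ > L_F > 0 and let g : [0,T] → [0,∞) be integrable. Suppose φ : [0,T] → [0,∞) is integrable and for all t ∈ [0,T], φ(t) ≤ (1/ε)∫₀^t e^{-λ₁(t-s)/ε}(g(s) + L_F φ(s)) ds, where ε > 0. Then ∫₀^T φ(t) dt ≤ (1/(λ₁ - L_F)) ∫₀^T g(s) ds. -/

import Mathlib

/-!
Extend `g + L_F φ` by zero outside `(0, T]` and the kernel `e^{-λ₁ u / ε} / ε` by zero for `u < 0`.
On `[0, T]` the right-hand side of the hypothesis is then the convolution of the two, and by
Fubini the integral of a convolution over `ℝ` is the product of the integrals. The kernel has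
mass `1 / λ₁`, so `∫ φ ≤ (∫ g + L_F ∫ φ) / λ₁`, and `λ₁ > L_F` lets the last term be absorbed.
-/

open MeasureTheory Set Real
open scoped Convolution

theorem intervalIntegral_kernel_mul_eq_convolution (k h : ℝ → ℝ) {t T : ℝ} (ht0 : 0 ≤ t)
    (htT : t ≤ T) :
    ∫ s in (0 : ℝ)..t, k (t - s) * h s = ((Ici 0).indicator k ⋆ (Ioc 0 T).indicator h) t := by
  rw [convolution_lsmul_swap, intervalIntegral.integral_of_le ht0,
    ← integral_indicator measurableSet_Ioc]
  congr 1
  ext s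
  by_cases hs : s ∈ Ioc 0 t
  · have hsT : s ∈ Ioc 0 T := ⟨hs.1, hs.2.trans htT⟩
    have hts : t - s ∈ Ici 0 := sub_nonneg.2 hs.2
    simp only [indicator_of_mem hs, indicator_of_mem hsT, indicator_of_mem hts, smul_eq_mul]
  · have : t - s ∉ Ici 0 ∨ s ∉ Ioc 0 T := by
      by_contra! H
      exact hs ⟨H.2.1, sub_nonneg.1 H.1⟩
    rcases this with hout | hout <;> simp [indicator_of_notMem hs, indicator_of_notMem hout]

theorem exp_neg_mul_div_eq (lam ε u : ℝ) : exp (-lam * u / ε) = exp (-(lam / ε) * u) := by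
  ring_nf

theorem integrableOn_Ici_exp_neg_mul_div_div {lam ε : ℝ} (hlam : 0 < lam) (hε : 0 < ε) :
    IntegrableOn (fun u => exp (-lam * u / ε) / ε) (Ici 0) := by
  simp_rw [exp_neg_mul_div_eq lam ε]
  exact (integrableOn_Ici_iff_integrableOn_Ioi).2
    ((integrableOn_exp_mul_Ioi (neg_neg_of_pos (div_pos hlam hε)) 0).div_const ε)

theorem integral_Ici_exp_neg_mul_div_div {lam ε : ℝ} (hlam : 0 < lam) (hε : 0 < ε) :
    ∫ u in Ici 0, exp (-lam * u / ε) / ε = 1 / lam := by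
  simp_rw [exp_neg_mul_div_eq lam ε]
  rw [integral_Ici_eq_integral_Ioi, integral_div,
    integral_exp_mul_Ioi (neg_neg_of_pos (div_pos hlam hε))]
  field_simp
  simp

theorem intervalIntegral_le_mul_of_le_volterra {k h φ : ℝ → ℝ} {T : ℝ} (hT : 0 ≤ T)
    (hk0 : ∀ u ∈ Ici 0, 0 ≤ k u) (hk : IntegrableOn k (Ici 0))
    (hh0 : ∀ s ∈ Icc 0 T, 0 ≤ h s) (hh : IntegrableOn h (Icc 0 T))
    (hφ : IntegrableOn φ (Icc 0 T))
    (hle : ∀ t ∈ Icc 0 T, φ t ≤ ∫ s in (0 : ℝ)..t, k (t - s) * h s) :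
    ∫ t in (0 : ℝ)..T, φ t ≤ (∫ u in Ici 0, k u) * ∫ s in (0 : ℝ)..T, h s := by
  set K := (Ici 0).indicator k
  set H := (Ioc 0 T).indicator h
  have hK : Integrable K := (integrable_indicator_iff measurableSet_Ici).2 hk
  have hH : Integrable H :=
    (integrable_indicator_iff measurableSet_Ioc).2 (hh.mono_set Ioc_subset_Icc_self)
  have hKH_nonneg : ∀ t, 0 ≤ (K ⋆ H) t := fun t => by
    rw [convolution_lsmul_swap]
    exact integral_nonneg fun s => mul_nonneg (indicator_nonneg hk0 _)
      (indicator_nonneg (fun s hs => hh0 s (Ioc_subset_Icc_self hs)) _)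
  have hKH : Integrable (K ⋆ H) := hK.integrable_convolution _ hH
  calc ∫ t in (0 : ℝ)..T, φ t
      ≤ ∫ t in (0 : ℝ)..T, (K ⋆ H) t :=
        intervalIntegral.integral_mono_on hT
          ((intervalIntegrable_iff_integrableOn_Icc_of_le hT).2 hφ) hKH.intervalIntegrable
          fun t ht =>
            (hle t ht).trans_eq (intervalIntegral_kernel_mul_eq_convolution k h ht.1 ht.2)
    _ ≤ ∫ t, (K ⋆ H) t := by
        rw [intervalIntegral.integral_of_le hT]
        exact setIntegral_le_integral hKH (ae_of_all _ hKH_nonneg)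
    _ = (∫ u, K u) * ∫ s, H s := integral_convolution _ hK hH
    _ = (∫ u in Ici 0, k u) * ∫ s in (0 : ℝ)..T, h s := by
        rw [integral_indicator measurableSet_Ici,
          integral_indicator measurableSet_Ioc, intervalIntegral.integral_of_le hT]

theorem stmt_8 (lam LF T ε : ℝ) (hLF : 0 < LF) (hlam : LF < lam) (hT : 0 < T) (hε : 0 < ε)
    (g φ : ℝ → ℝ)
    (hg0 : ∀ t ∈ Set.Icc 0 T, 0 ≤ g t) (hφ0 : ∀ t ∈ Set.Icc 0 T, 0 ≤ φ t)
    (hgint : MeasureTheory.IntegrableOn g (Set.Icc 0 T))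
    (hφint : MeasureTheory.IntegrableOn φ (Set.Icc 0 T))
    (hineq : ∀ t ∈ Set.Icc 0 T,
      φ t ≤ (1 / ε) * ∫ s in (0 : ℝ)..t, Real.exp (-lam * (t - s) / ε) * (g s + LF * φ s)) :
    (∫ t in (0 : ℝ)..T, φ t) ≤ (1 / (lam - LF)) * ∫ s in (0 : ℝ)..T, g s := by
  have hlam0 : 0 < lam := hLF.trans hlam
  have hvolterra : ∀ t ∈ Icc 0 T,
      φ t ≤ ∫ s in (0 : ℝ)..t, exp (-lam * (t - s) / ε) / ε * (g s + LF * φ s) := by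
    intro t ht
    refine (hineq t ht).trans_eq ?_
    rw [← intervalIntegral.integral_const_mul]
    congr 1 with s
    ring
  have hbound := intervalIntegral_le_mul_of_le_volterra hT.le (fun u _ => by positivity)
    (integrableOn_Ici_exp_neg_mul_div_div hlam0 hε)
    (fun s hs => add_nonneg (hg0 s hs) (mul_nonneg hLF.le (hφ0 s hs)))
    (hgint.add (hφint.const_mul LF)) hφint hvolterra
  have hgi := (intervalIntegrable_iff_integrableOn_Icc_of_le hT.le).2 hgint
  have hφi := (intervalIntegrable_iff_integrableOn_Icc_of_le hT.le).2 hφint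
  rw [integral_Ici_exp_neg_mul_div_div hlam0 hε,
    intervalIntegral.integral_add hgi (hφi.const_mul LF), intervalIntegral.integral_const_mul,
    one_div, inv_mul_eq_div, le_div_iff₀ hlam0] at hbound
  rw [one_div, inv_mul_eq_div, le_div_iff₀ (sub_pos.2 hlam)]
  linarith
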